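/- There exists exactly one norm ‖·‖ on c₀₀ satisfying the implicit equation ‖x‖ = max(‖x‖_{ℓ∞}, sup{ (1/f(n)) Σ_{i=1}^n ‖E_i(x)‖ : n ≥ 2, E₁ < E₂ < ⋯ < E_n finite subsets of ℕ }) for all x ∈ c₀₀. -/

import Mathlib

abbrev c00 : Type := ℕ →₀ ℝ

noncomputable def flog (x : ℝ) : ℝ := Real.logb 2 (x + 1)

noncomputable def supNorm (x : c00) : ℝ := ⨆ i, |x i|

def proj (E : Finset ℕ) (x : c00) : c00 := x.filter (· ∈ E)

def FLt (A B : Finset ℕ) : Prop := ∀ a ∈ A, ∀ b ∈ B, a < b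

def IsNormC00 (N : c00 → ℝ) : Prop :=
  (∀ x, N x = 0 ↔ x = 0) ∧ (∀ x y, N (x + y) ≤ N x + N y) ∧
    ∀ (a : ℝ) (x : c00), N (a • x) = |a| * N x

def schSet (N : c00 → ℝ) (x : c00) : Set ℝ :=
  {s | ∃ n : ℕ, 2 ≤ n ∧ ∃ E : Fin n → Finset ℕ,
    (∀ i j : Fin n, i < j → FLt (E i) (E j)) ∧
    s = (flog n)⁻¹ * ∑ i, N (proj (E i) x)}

def IsSchlumprechtNorm (N : c00 → ℝ) : Prop :=
  IsNormC00 N ∧ ∀ x : c00, IsLUB (insert (supNorm x) (schSet N x)) (N x)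

def IsBlockSeq (x : ℕ → c00) : Prop :=
  (∀ n, x n ≠ 0) ∧ ∀ n, ∀ i ∈ (x n).support, ∀ j ∈ (x (n+1)).support, i < j

def SeqEquiv (N : c00 → ℝ) (u v : ℕ → c00) : Prop :=
  ∃ c : ℝ, 1 ≤ c ∧ ∀ a : ℕ →₀ ℝ,
    (1 / c) * N (a.sum fun i t => t • u i) ≤ N (a.sum fun i t => t • v i) ∧
    N (a.sum fun i t => t • v i) ≤ c * N (a.sum fun i t => t • u i)

/-!
The right-hand side of the implicit equation is a monotone operator on functions lying between
the sup norm and the ℓ¹ norm, and it preserves subadditivity and homogeneity. Iterating it from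
the sup norm gives a pointwise increasing sequence bounded by the ℓ¹ norm, whose limit solves the
equation.

Two solutions agree by induction on the size of the support: if no `Eᵢ` contains `supp x`, every
`Eᵢ(x)` has smaller support, so both solutions give the same term; if one `Eᵢ` does, the term
is `N x / f(n) ≤ N x / f(2) < N x`, so it cannot be the one realising `N x`.
-/

open Filter Function Topology

noncomputable def l1Norm (x : c00) : ℝ := ∑ i ∈ x.support, |x i|

lemma l1Norm_nonneg (x : c00) : 0 ≤ l1Norm x :=
  Finset.sum_nonneg fun _ _ => abs_nonneg _

lemma abs_apply_le_l1Norm (x : c00) (i : ℕ) : |x i| ≤ l1Norm x := by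
  by_cases h : i ∈ x.support
  · exact Finset.single_le_sum (fun j _ => abs_nonneg (x j)) h
  · rw [Finsupp.notMem_support_iff.1 h, abs_zero]; exact l1Norm_nonneg x

lemma l1Norm_proj (E : Finset ℕ) (x : c00) :
    l1Norm (proj E x) = ∑ i ∈ x.support with i ∈ E, |x i| :=
  Finset.sum_congr rfl fun _ hi => by
    rw [proj, Finsupp.filter_apply, if_pos (Finset.mem_filter.1 hi).2]

lemma sum_l1Norm_proj_le {ι : Type*} [Fintype ι] {E : ι → Finset ℕ}
    (hE : Pairwise (Disjoint on E)) (x : c00) : ∑ i, l1Norm (proj (E i) x) ≤ l1Norm x := by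
  have hdisj : ((Finset.univ : Finset ι) : Set ι).PairwiseDisjoint
      fun i => {j ∈ x.support | j ∈ E i} :=
    fun i _ i' _ hii' => Finset.disjoint_left.2 fun a ha ha' =>
      Finset.disjoint_left.1 (hE hii') (Finset.mem_filter.1 ha).2 (Finset.mem_filter.1 ha').2
  simp_rw [l1Norm_proj]
  rw [← Finset.sum_biUnion hdisj]
  exact Finset.sum_le_sum_of_subset_of_nonneg
    (Finset.biUnion_subset.2 fun _ _ => Finset.filter_subset _ _) fun _ _ _ => abs_nonneg _

lemma abs_apply_le_supNorm (x : c00) (i : ℕ) : |x i| ≤ supNorm x :=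
  le_ciSup ⟨l1Norm x, by rintro r ⟨i, rfl⟩; exact abs_apply_le_l1Norm x i⟩ i

lemma supNorm_le_l1Norm (x : c00) : supNorm x ≤ l1Norm x :=
  ciSup_le (abs_apply_le_l1Norm x)

lemma supNorm_pos {x : c00} (hx : x ≠ 0) : 0 < supNorm x := by
  obtain ⟨i, hi⟩ := Finsupp.support_nonempty_iff.2 hx
  exact (abs_pos.2 (Finsupp.mem_support_iff.1 hi)).trans_le (abs_apply_le_supNorm x i)

lemma supNorm_add_le (x y : c00) : supNorm (x + y) ≤ supNorm x + supNorm y :=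
  ciSup_le fun i => (abs_add_le _ _).trans
    (add_le_add (abs_apply_le_supNorm x i) (abs_apply_le_supNorm y i))

lemma supNorm_smul (a : ℝ) (x : c00) : supNorm (a • x) = |a| * supNorm x := by
  simp only [supNorm, Real.mul_iSup_of_nonneg (abs_nonneg a), Finsupp.smul_apply, smul_eq_mul,
    abs_mul]

lemma one_lt_flog_two : 1 < flog 2 := by
  rw [flog, ← Real.logb_self_eq_one one_lt_two]
  exact Real.logb_lt_logb one_lt_two two_pos (by norm_num)

lemma flog_two_le_flog {n : ℕ} (hn : 2 ≤ n) : flog 2 ≤ flog n :=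
  Real.logb_le_logb_of_le one_lt_two (by norm_num) (by gcongr; exact_mod_cast hn)

lemma inv_flog_nonneg {n : ℕ} (hn : 2 ≤ n) : 0 ≤ (flog n)⁻¹ :=
  inv_nonneg.2 (zero_le_one.trans (one_lt_flog_two.le.trans (flog_two_le_flog hn)))

lemma inv_flog_le_one {n : ℕ} (hn : 2 ≤ n) : (flog n)⁻¹ ≤ 1 :=
  inv_le_one_of_one_le₀ (one_lt_flog_two.le.trans (flog_two_le_flog hn))

lemma FLt.disjoint {A B : Finset ℕ} (h : FLt A B) : Disjoint A B :=
  Finset.disjoint_left.2 fun a ha hb => lt_irrefl a (h a ha a hb)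

lemma pairwise_disjoint_of_fLt {n : ℕ} {E : Fin n → Finset ℕ}
    (hE : ∀ i j : Fin n, i < j → FLt (E i) (E j)) : Pairwise (Disjoint on E) := fun i j hij =>
  hij.lt_or_gt.elim (fun h => (hE i j h).disjoint) fun h => (hE j i h).disjoint.symm

structure IsAdmissible (N : c00 → ℝ) : Prop where
  supNorm_le : ∀ x, supNorm x ≤ N x
  le_l1Norm : ∀ x, N x ≤ l1Norm x
  add_le : ∀ x y, N (x + y) ≤ N x + N y
  smul : ∀ (a : ℝ) x, N (a • x) = |a| * N x

lemma isAdmissible_supNorm : IsAdmissible supNorm :=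
  ⟨fun _ => le_rfl, supNorm_le_l1Norm, supNorm_add_le, supNorm_smul⟩

lemma IsAdmissible.isNormC00 {N : c00 → ℝ} (hN : IsAdmissible N) : IsNormC00 N := by
  refine ⟨fun x => ⟨fun h => ?_, ?_⟩, hN.add_le, hN.smul⟩
  · by_contra hx
    exact (supNorm_pos hx).not_ge (h ▸ hN.supNorm_le x)
  · rintro rfl
    simpa using hN.smul 0 0

section Existence

variable {N N' : c00 → ℝ}

lemma l1Norm_mem_upperBounds (hN : ∀ y, N y ≤ l1Norm y) (x : c00) :
    l1Norm x ∈ upperBounds (insert (supNorm x) (schSet N x)) := by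
  rintro s (rfl | ⟨n, hn, E, hE, rfl⟩)
  · exact supNorm_le_l1Norm x
  calc (flog n)⁻¹ * ∑ i, N (proj (E i) x)
      ≤ (flog n)⁻¹ * ∑ i, l1Norm (proj (E i) x) :=
        mul_le_mul_of_nonneg_left (Finset.sum_le_sum fun i _ => hN _) (inv_flog_nonneg hn)
    _ ≤ ∑ i, l1Norm (proj (E i) x) :=
        mul_le_of_le_one_left (Finset.sum_nonneg fun i _ => l1Norm_nonneg _) (inv_flog_le_one hn)
    _ ≤ l1Norm x := sum_l1Norm_proj_le (pairwise_disjoint_of_fLt hE) x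

open Pointwise in
lemma schSet_smul (hN : ∀ (a : ℝ) x, N (a • x) = |a| * N x) (a : ℝ) (x : c00) :
    schSet N (a • x) = |a| • schSet N x := by
  have key : ∀ n (E : Fin n → Finset ℕ), (flog n)⁻¹ * ∑ i, N (proj (E i) (a • x)) =
      |a| * ((flog n)⁻¹ * ∑ i, N (proj (E i) x)) := by
    intro n E
    simp only [proj, Finsupp.filter_smul, hN, ← Finset.mul_sum]
    ring
  ext s
  simp only [schSet, Set.mem_smul_set, Set.mem_ofPred_eq, smul_eq_mul]
  constructor
  · rintro ⟨n, hn, E, hE, rfl⟩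
    exact ⟨_, ⟨n, hn, E, hE, rfl⟩, (key n E).symm⟩
  · rintro ⟨t, ⟨n, hn, E, hE, rfl⟩, rfl⟩
    exact ⟨n, hn, E, hE, (key n E).symm⟩

noncomputable def schOp (N : c00 → ℝ) (x : c00) : ℝ :=
  sSup (insert (supNorm x) (schSet N x))

lemma isLUB_schOp (hN : ∀ y, N y ≤ l1Norm y) (x : c00) :
    IsLUB (insert (supNorm x) (schSet N x)) (schOp N x) :=
  isLUB_csSup (Set.insert_nonempty _ _) ⟨_, l1Norm_mem_upperBounds hN x⟩

lemma schOp_mono (hNN' : ∀ y, N y ≤ N' y) (hN' : ∀ y, N' y ≤ l1Norm y) (x : c00) :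
    schOp N x ≤ schOp N' x := by
  refine csSup_le (Set.insert_nonempty _ _) ?_
  rintro s (rfl | ⟨n, hn, E, hE, rfl⟩)
  · exact (isLUB_schOp hN' x).1 (Set.mem_insert _ _)
  calc (flog n)⁻¹ * ∑ i, N (proj (E i) x)
      ≤ (flog n)⁻¹ * ∑ i, N' (proj (E i) x) :=
        mul_le_mul_of_nonneg_left (Finset.sum_le_sum fun i _ => hNN' _) (inv_flog_nonneg hn)
    _ ≤ schOp N' x := (isLUB_schOp hN' x).1 (Set.mem_insert_of_mem _ ⟨n, hn, E, hE, rfl⟩)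

open Pointwise in
lemma IsAdmissible.schOp (hN : IsAdmissible N) : IsAdmissible (schOp N) where
  supNorm_le x := (isLUB_schOp hN.le_l1Norm x).1 (Set.mem_insert _ _)
  le_l1Norm x := (isLUB_schOp hN.le_l1Norm x).2 (l1Norm_mem_upperBounds hN.le_l1Norm x)
  add_le x y := by
    have hx := (isLUB_schOp hN.le_l1Norm x).1
    have hy := (isLUB_schOp hN.le_l1Norm y).1
    refine (isLUB_schOp hN.le_l1Norm (x + y)).2 ?_
    rintro s (rfl | ⟨n, hn, E, hE, rfl⟩)
    · exact (supNorm_add_le x y).trans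
        (add_le_add (hx (Set.mem_insert _ _)) (hy (Set.mem_insert _ _)))
    calc (flog n)⁻¹ * ∑ i, N (proj (E i) (x + y))
        ≤ (flog n)⁻¹ * ∑ i, N (proj (E i) x) + (flog n)⁻¹ * ∑ i, N (proj (E i) y) := by
          rw [← mul_add, ← Finset.sum_add_distrib]
          refine mul_le_mul_of_nonneg_left (Finset.sum_le_sum fun i _ => ?_) (inv_flog_nonneg hn)
          rw [proj, Finsupp.filter_add]
          exact hN.add_le _ _
      _ ≤ _ := add_le_add (hx (Set.mem_insert_of_mem _ ⟨n, hn, E, hE, rfl⟩))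
          (hy (Set.mem_insert_of_mem _ ⟨n, hn, E, hE, rfl⟩))
  smul a x := by
    rw [_root_.schOp, schSet_smul hN.smul, supNorm_smul, ← smul_eq_mul, ← Set.smul_set_insert,
      Real.sSup_smul_of_nonneg (abs_nonneg a), _root_.schOp, smul_eq_mul]

noncomputable def schIter : ℕ → c00 → ℝ
  | 0 => supNorm
  | k + 1 => schOp (schIter k)

lemma isAdmissible_schIter : ∀ k, IsAdmissible (schIter k)
  | 0 => isAdmissible_supNorm
  | k + 1 => (isAdmissible_schIter k).schOp

lemma monotone_schIter (x : c00) : Monotone fun k => schIter k x := by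
  refine monotone_nat_of_le_succ fun k => ?_
  induction k generalizing x with
  | zero => exact (isAdmissible_schIter 1).supNorm_le x
  | succ k ih => exact schOp_mono ih (isAdmissible_schIter (k + 1)).le_l1Norm x

lemma bddAbove_schIter (x : c00) : BddAbove (Set.range fun k => schIter k x) :=
  ⟨l1Norm x, by rintro r ⟨k, rfl⟩; exact (isAdmissible_schIter k).le_l1Norm x⟩

noncomputable def schNorm (x : c00) : ℝ := ⨆ k, schIter k x

lemma tendsto_schIter (x : c00) : Tendsto (fun k => schIter k x) atTop (𝓝 (schNorm x)) :=
  tendsto_atTop_ciSup (monotone_schIter x) (bddAbove_schIter x)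

lemma schIter_le_schNorm (k : ℕ) (x : c00) : schIter k x ≤ schNorm x :=
  le_ciSup (bddAbove_schIter x) k

lemma isAdmissible_schNorm : IsAdmissible schNorm where
  supNorm_le := schIter_le_schNorm 0
  le_l1Norm x := ciSup_le fun k => (isAdmissible_schIter k).le_l1Norm x
  add_le x y := le_of_tendsto_of_tendsto' (tendsto_schIter (x + y))
    ((tendsto_schIter x).add (tendsto_schIter y)) fun k => (isAdmissible_schIter k).add_le x y
  smul a x := tendsto_nhds_unique (tendsto_schIter (a • x)) <| by
    simpa only [(isAdmissible_schIter _).smul] using (tendsto_schIter x).const_mul |a|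

lemma schOp_schNorm : schOp schNorm = schNorm := by
  funext x
  refine le_antisymm ((isLUB_schOp isAdmissible_schNorm.le_l1Norm x).2 ?_) (ciSup_le fun k => ?_)
  · rintro s (rfl | ⟨n, hn, E, hE, rfl⟩)
    · exact isAdmissible_schNorm.supNorm_le x
    refine le_of_tendsto'
      ((tendsto_finsetSum _ fun i _ => tendsto_schIter (proj (E i) x)).const_mul (flog n)⁻¹)
      fun k => ?_
    exact ((isLUB_schOp (isAdmissible_schIter k).le_l1Norm x).1
      (Set.mem_insert_of_mem _ ⟨n, hn, E, hE, rfl⟩)).trans (schIter_le_schNorm (k + 1) x)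
  cases k with
  | zero => exact isAdmissible_schNorm.schOp.supNorm_le x
  | succ k => exact schOp_mono (schIter_le_schNorm k) isAdmissible_schNorm.le_l1Norm x

theorem isSchlumprechtNorm_schNorm : IsSchlumprechtNorm schNorm :=
  ⟨isAdmissible_schNorm.isNormC00, fun x => by
    simpa only [schOp_schNorm] using isLUB_schOp isAdmissible_schNorm.le_l1Norm x⟩

end Existence

section Uniqueness

variable {N M : c00 → ℝ}

lemma card_support_proj_lt {E : Finset ℕ} {y : c00} (h : ¬ y.support ⊆ E) :
    (proj E y).support.card < y.support.card := by
  obtain ⟨a, ha, haE⟩ := Finset.not_subset.1 h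
  exact Finset.card_lt_card (Finset.filter_ssubset.2 ⟨a, ha, haE⟩)

lemma IsNormC00.sum_proj_eq_of_support_subset {ι : Type*} [Fintype ι] (hN : IsNormC00 N)
    {E : ι → Finset ℕ} (hE : Pairwise (Disjoint on E)) {y : c00} {i : ι}
    (hi : y.support ⊆ E i) : ∑ j, N (proj (E j) y) = N y := by
  have hproj_i : proj (E i) y = y :=
    (Finsupp.filter_eq_self_iff _ _).2 fun a ha => hi (Finsupp.mem_support_iff.2 ha)
  have hproj_j : ∀ j ≠ i, proj (E j) y = 0 := fun j hj =>
    (Finsupp.filter_eq_zero_iff _ _).2 fun a ha => Finsupp.notMem_support_iff.1 fun ha' =>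
      Finset.disjoint_left.1 (hE hj) ha (hi ha')
  rw [Finset.sum_eq_single i (fun j _ hj => by rw [hproj_j j hj, (hN.1 0).2 rfl])
    (fun h => absurd (Finset.mem_univ i) h), hproj_i]

lemma IsSchlumprechtNorm.le_of_eq_of_card_support_lt (hN : IsSchlumprechtNorm N)
    (hM : IsSchlumprechtNorm M) (y : c00)
    (IH : ∀ z : c00, z.support.card < y.support.card → N z = M z) : N y ≤ M y := by
  rcases eq_or_ne y 0 with rfl | hy
  · rw [(hN.1.1 0).2 rfl, (hM.1.1 0).2 rfl]
  have hNy : 0 < N y := (supNorm_pos hy).trans_le ((hN.2 y).1 (Set.mem_insert _ _))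
  have hub : max (M y) ((flog 2)⁻¹ * N y) ∈ upperBounds (insert (supNorm y) (schSet N y)) := by
    rintro s (rfl | ⟨n, hn, E, hE, rfl⟩)
    · exact le_max_of_le_left ((hM.2 y).1 (Set.mem_insert _ _))
    by_cases hcov : ∃ i, y.support ⊆ E i
    · obtain ⟨i, hi⟩ := hcov
      rw [hN.1.sum_proj_eq_of_support_subset (pairwise_disjoint_of_fLt hE) hi]
      exact le_max_of_le_right (mul_le_mul_of_nonneg_right
        (inv_anti₀ (zero_lt_one.trans one_lt_flog_two) (flog_two_le_flog hn)) hNy.le)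
    · simp only [fun i => IH _ (card_support_proj_lt fun h => hcov ⟨i, h⟩)]
      exact le_max_of_le_left ((hM.2 y).1 (Set.mem_insert_of_mem _ ⟨n, hn, E, hE, rfl⟩))
  refine (le_max_iff.1 ((hN.2 y).2 hub)).resolve_right fun h => h.not_gt ?_
  exact mul_lt_of_lt_one_left hNy (inv_lt_one_of_one_lt₀ one_lt_flog_two)

lemma IsSchlumprechtNorm.eq (hN : IsSchlumprechtNorm N) (hM : IsSchlumprechtNorm M) : N = M := by
  funext y
  induction h : y.support.card using Nat.strong_induction_on generalizing y with
  | _ n ih =>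
    subst h
    have IH : ∀ z : c00, z.support.card < y.support.card → N z = M z :=
      fun z hz => ih _ hz z rfl
    exact le_antisymm (hN.le_of_eq_of_card_support_lt hM y IH)
      (hM.le_of_eq_of_card_support_lt hN y fun z hz => (IH z hz).symm)

end Uniqueness

/-- there exists exactly one norm on `c₀₀` satisfying the
Schlumprecht implicit equation. -/
theorem schlumprecht_norm_exists_unique :
    ∃! N : c00 → ℝ, IsSchlumprechtNorm N :=
  ⟨schNorm, isSchlumprechtNorm_schNorm, fun _ hM => hM.eq isSchlumprechtNorm_schNorm⟩
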